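/- arXiv:1406.4672 — 6 statements merged into one kernel-verified Lean document; each statement's English description precedes it below -/
import Mathlib

section
/- The bracket defined on 𝔤 = V* ⊕ ℝe₊ ⊕ ℝe₋ ⊕ V by the given relations satisfies the Jacobi identity, i.e. 𝔤 is a Lie algebra: [x,[y,z]] + [y,[z,x]] + [z,[x,y]] = 0 for all x, y, z ∈ 𝔤. -/
open Matrix

/-- The vector space `𝔤 = V* ⊕ ℝe₊ ⊕ ℝe₋ ⊕ V` for `V = ℝⁿ`.  An element `(p, a, b, u)`
represents `p* + a·e₊ + b·e₋ + u`, where `p* ∈ V*` corresponds to `p ∈ V` via the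
standard inner product. -/
abbrev CWAlg (n : ℕ) : Type := (Fin n → ℝ) × ℝ × ℝ × (Fin n → ℝ)

/-- The bracket of the Cahen–Wallach Lie algebra, determined by
`[e₋, w] = w*`, `[v*, e₋] = Bv`, `[v*, w] = -⟨Bv, w⟩ e₊`, all other brackets among
the summands `V*`, `ℝe₊`, `ℝe₋`, `V` being zero. -/
def cwBracket {n : ℕ} (B : Matrix (Fin n) (Fin n) ℝ) (x y : CWAlg n) : CWAlg n :=
  (x.2.2.1 • y.2.2.2 - y.2.2.1 • x.2.2.2,
   -(B.mulVec x.1 ⬝ᵥ y.2.2.2) + B.mulVec y.1 ⬝ᵥ x.2.2.2,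
   0,
   y.2.2.1 • B.mulVec x.1 - x.2.2.1 • B.mulVec y.1)

lemma symm_dot {n : ℕ} {B : Matrix (Fin n) (Fin n) ℝ} (hB : B.IsSymm)
    (u v : Fin n → ℝ) : B.mulVec u ⬝ᵥ v = B.mulVec v ⬝ᵥ u := by
  rw [dotProduct_comm, Matrix.dotProduct_mulVec, ← Matrix.mulVec_transpose, hB.eq]

/-- The bracket on `𝔤 = V* ⊕ ℝe₊ ⊕ ℝe₋ ⊕ V` satisfies the Jacobi identity, i.e. `𝔤`
is a Lie algebra. -/
theorem cwBracket_jacobi {n : ℕ} (hn : 1 ≤ n) (B : Matrix (Fin n) (Fin n) ℝ)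
    (hB : B.IsSymm) (x y z : CWAlg n) :
    cwBracket B x (cwBracket B y z) + cwBracket B y (cwBracket B z x)
      + cwBracket B z (cwBracket B x y) = 0 := by
  obtain ⟨p, a, b, u⟩ := x
  obtain ⟨q, c, d, v⟩ := y
  obtain ⟨r, e, f, w⟩ := z
  simp only [cwBracket, Prod.mk_add_mk, Prod.mk_eq_zero, Prod.ext_iff, Prod.fst_zero, Prod.snd_zero]
  refine ⟨?_, ?_, by ring, ?_⟩
  · funext i; simp [Matrix.mulVec, smul_sub]; ring
  · simp only [Matrix.mulVec_smul, Matrix.mulVec_sub, dotProduct_sub,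
      sub_dotProduct, smul_dotProduct, dotProduct_smul,
      smul_eq_mul]
    rw [symm_dot hB u v, symm_dot hB v w, symm_dot hB u w,
      dotProduct_comm (B *ᵥ p) (B *ᵥ q), dotProduct_comm (B *ᵥ p) (B *ᵥ r),
      dotProduct_comm (B *ᵥ q) (B *ᵥ r)]
    ring
  · funext i
    simp [Matrix.mulVec_smul, Matrix.mulVec_sub, smul_sub, Matrix.mulVec, mul_comm]
    ring
end

section
/- The symmetric bilinear form 𝔤̊ on 𝔤 defined by 𝔤̊(v*, w*) = ⟨Bv, w⟩, 𝔤̊(e₊, e₋) = 𝔤̊(e₋, e₊) = 1, 𝔤̊(v, w) = ⟨v, w⟩ for v, w ∈ V, 𝔤̊(e₊, e₊) = 𝔤̊(e₋, e₋) = 0, and with all other pairings between the summands V*, ℝe₊, ℝe₋, V equal to zero, is invariant under the adjoint action: 𝔤̊([x, y], z) + 𝔤̊(y, [x, z]) = 0 for all x, y, z ∈ 𝔤. -/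
open Matrix

/-- The symmetric bilinear form `𝔤̊` on `𝔤`: `𝔤̊(v*, w*) = ⟨Bv, w⟩`,
`𝔤̊(e₊, e₋) = 𝔤̊(e₋, e₊) = 1`, `𝔤̊(v, w) = ⟨v, w⟩`, `𝔤̊(e₊, e₊) = 𝔤̊(e₋, e₋) = 0`,
all other pairings between the summands being zero. -/
def cwForm {n : ℕ} (B : Matrix (Fin n) (Fin n) ℝ) (x y : CWAlg n) : ℝ :=
  B.mulVec x.1 ⬝ᵥ y.1 + x.2.1 * y.2.2.1 + x.2.2.1 * y.2.1 + x.2.2.2 ⬝ᵥ y.2.2.2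

/-- The bilinear form `𝔤̊` is invariant under the adjoint action:
`𝔤̊([x,y], z) + 𝔤̊(y, [x,z]) = 0`. -/
theorem cwForm_invariant {n : ℕ} (hn : 1 ≤ n) (B : Matrix (Fin n) (Fin n) ℝ)
    (hB : B.IsSymm) (x y z : CWAlg n) :
    cwForm B (cwBracket B x y) z + cwForm B y (cwBracket B x z) = 0 := by
  have hs : ∀ s t : Fin n → ℝ, B *ᵥ s ⬝ᵥ t = B *ᵥ t ⬝ᵥ s := fun s t => by
    rw [dotProduct_comm, dotProduct_mulVec, ← vecMul_transpose, hB.eq]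
  obtain ⟨p, a, b, u⟩ := x
  obtain ⟨q, c, d, v⟩ := y
  obtain ⟨r, e, f, w⟩ := z
  simp only [cwForm, cwBracket, mulVec_smul, mulVec_sub, sub_dotProduct,
    smul_dotProduct, dotProduct_sub, dotProduct_smul, smul_eq_mul]
  linear_combination b * hs v r - d * hs u r + f * dotProduct_comm v (B *ᵥ p) -
    b * dotProduct_comm v (B *ᵥ r)
end

section
/- Let A be a skew-symmetric real n×n matrix and extend A to a linear map D_A on 𝔤 by D_A(w) = Aw for w ∈ V, D_A(v*) = (Av)* for v* ∈ V*, and D_A(e₊) = D_A(e₋) = 0. Then D_A is a derivation of the bracket of 𝔤 (i.e. D_A([x,y]) = [D_A x, y] + [x, D_A y] for all x, y ∈ 𝔤) if and only if AB = BA. -/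
open Matrix

/-- The extension of a matrix `A` to a linear map `D_A` on `𝔤`:
`D_A(w) = Aw`, `D_A(v*) = (Av)*`, `D_A(e₊) = D_A(e₋) = 0`. -/
def cwDA {n : ℕ} (A : Matrix (Fin n) (Fin n) ℝ) (x : CWAlg n) : CWAlg n :=
  (A.mulVec x.1, 0, 0, A.mulVec x.2.2.2)

/-- For a skew-symmetric `A`, the map `D_A` is a derivation of the bracket of `𝔤`
if and only if `AB = BA`. -/
theorem cwDA_derivation_iff_commute {n : ℕ} (hn : 1 ≤ n)
    (B A : Matrix (Fin n) (Fin n) ℝ) (hB : B.IsSymm) (hA : Aᵀ = -A) :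
    (∀ x y : CWAlg n,
        cwDA A (cwBracket B x y)
          = cwBracket B (cwDA A x) y + cwBracket B x (cwDA A y))
      ↔ A * B = B * A := by
  have key : ∀ u w : Fin n → ℝ, B.mulVec u ⬝ᵥ A.mulVec w = -((A * B).mulVec u ⬝ᵥ w) := by
    intro u w
    rw [dotProduct_mulVec, ← mulVec_transpose, hA, ← mulVec_mulVec, neg_mulVec,
      neg_dotProduct, mulVec_mulVec]
  constructor
  · intro h
    have h2 : ∀ u w : Fin n → ℝ, (A * B).mulVec u ⬝ᵥ w = (B * A).mulVec u ⬝ᵥ w := by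
      intro u w
      have := congrArg (fun z : CWAlg n => z.2.1) (h (u, 0, 0, 0) (0, 0, 0, w))
      simp [cwDA, cwBracket, key, mulVec_mulVec] at this
      linarith
    have h3 : ∀ u, (A * B).mulVec u = (B * A).mulVec u := by
      intro u; funext i
      simpa [dotProduct_single] using h2 u (Pi.single i 1)
    ext i j
    simpa [mulVec_single] using congrFun (h3 (Pi.single j 1)) i
  · intro hAB x y
    have hBA : ∀ v : Fin n → ℝ, B.mulVec (A.mulVec v) = A.mulVec (B.mulVec v) := by
      intro v; rw [mulVec_mulVec, mulVec_mulVec, hAB]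
    have hprod : ∀ v w : Fin n → ℝ, (A * B).mulVec v ⬝ᵥ w = A.mulVec (B.mulVec v) ⬝ᵥ w := by
      intro v w; rw [← mulVec_mulVec]
    ext <;>
      simp [cwDA, cwBracket, mulVec_sub, mulVec_smul, hBA, key, hprod, Prod.ext_iff] <;>
      ring
end

section
/- Let B = diag(λ₁², …, λₙ²) with λ₁, …, λₙ ∈ ℝ. Then the following vector fields on ℝ^{n+2} are Killing for g_B: K₊ = −∂₊; K₋ = −∂₋; for each i = 1,…,n, K_{(i)} = cos(λ_i x⁻)∂_i + λ_i sin(λ_i x⁻) x^i ∂₊ and K_{(i*)} = −λ_i sin(λ_i x⁻)∂_i + λ_i² cos(λ_i x⁻) x^i ∂₊; and for each pair i ≠ j with λ_i² = λ_j², K_{(ij)} = x^j ∂_i − x^i ∂_j. -/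
open Matrix

/-- Index type for the coordinates `(x⁺, x⁻, x¹, …, xⁿ)` on `ℝ^{n+2}`:
`Sum.inl 0` is the index `+`, `Sum.inl 1` is the index `−`, and `Sum.inr i` is `i`. -/
abbrev CWIdx (n : ℕ) : Type := Fin 2 ⊕ Fin n

/-- Points of `ℝ^{n+2}`. -/
abbrev CWPt (n : ℕ) : Type := CWIdx n → ℝ

/-- The coefficients of the Cahen–Wallach metric `g_B`. -/
noncomputable def gB {n : ℕ} (B : Matrix (Fin n) (Fin n) ℝ) (x : CWPt n) :
    CWIdx n → CWIdx n → ℝ :=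
  fun μ ν => match μ, ν with
  | .inl a, .inl b =>
      if a = 0 ∧ b = 1 then 1
      else if a = 1 ∧ b = 0 then 1
      else if a = 1 ∧ b = 1 then -(∑ i, ∑ j, B i j * x (.inr i) * x (.inr j))
      else 0
  | .inr i, .inr j => if i = j then 1 else 0
  | _, _ => 0

/-- Partial derivative `∂_μ f` of a scalar function on `ℝ^{n+2}`. -/
noncomputable def pd {n : ℕ} (μ : CWIdx n) (f : CWPt n → ℝ) (x : CWPt n) : ℝ :=
  fderiv ℝ f x (Pi.single μ 1)

/-- A vector field `X` on `ℝ^{n+2}` is Killing for `g_B`: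
`∑_κ X^κ ∂_κ (g_B)_{μν} + ∑_κ (∂_μ X^κ)(g_B)_{κν} + ∑_κ (∂_ν X^κ)(g_B)_{μκ} = 0`. -/
def IsKilling {n : ℕ} (B : Matrix (Fin n) (Fin n) ℝ) (X : CWPt n → CWPt n) : Prop :=
  ∀ (x : CWPt n) (μ ν : CWIdx n),
    (∑ κ, X x κ * pd κ (fun y => gB B y μ ν) x)
      + (∑ κ, pd μ (fun y => X y κ) x * gB B x κ ν)
      + (∑ κ, pd ν (fun y => X y κ) x * gB B x μ κ) = 0

/-- `K₊ = −∂₊`. -/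
noncomputable def Kplus {n : ℕ} : CWPt n → CWPt n := fun _ => -Pi.single (Sum.inl 0) 1

/-- `K₋ = −∂₋`. -/
noncomputable def Kminus {n : ℕ} : CWPt n → CWPt n := fun _ => -Pi.single (Sum.inl 1) 1

/-- `K_{(i)} = cos(λ_i x⁻)∂_i + λ_i sin(λ_i x⁻) x^i ∂₊`. -/
noncomputable def Ki {n : ℕ} (lam : Fin n → ℝ) (i : Fin n) : CWPt n → CWPt n := fun x =>
  Pi.single (Sum.inr i) (Real.cos (lam i * x (Sum.inl 1)))
    + Pi.single (Sum.inl 0) (lam i * Real.sin (lam i * x (Sum.inl 1)) * x (Sum.inr i))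

/-- `K_{(i*)} = −λ_i sin(λ_i x⁻)∂_i + λ_i² cos(λ_i x⁻) x^i ∂₊`. -/
noncomputable def Kistar {n : ℕ} (lam : Fin n → ℝ) (i : Fin n) : CWPt n → CWPt n := fun x =>
  Pi.single (Sum.inr i) (-(lam i * Real.sin (lam i * x (Sum.inl 1))))
    + Pi.single (Sum.inl 0) (lam i ^ 2 * Real.cos (lam i * x (Sum.inl 1)) * x (Sum.inr i))

/-- `K_{(ij)} = x^j ∂_i − x^i ∂_j`. -/
noncomputable def Kij {n : ℕ} (i j : Fin n) : CWPt n → CWPt n := fun x =>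
  Pi.single (Sum.inr i) (x (Sum.inr j)) - Pi.single (Sum.inr j) (x (Sum.inr i))

/-!
All the fields are independent of `x⁺` and have constant `∂₋`-component, and for such a field
the `(++)`, `(+−)` and `(+j)` Killing equations hold trivially. What remains are the `(−−)`
equation `X(g₋₋) + 2 ∂₋X⁺ = 0`, the `(−j)` equation `∂₋Xʲ + ∂ⱼX⁺ = 0` and skew-symmetry of
`∂ᵢXʲ`. Both `K₍ᵢ₎` and `K₍ᵢ*₎` have the form `c(x⁻) ∂ᵢ − c′(x⁻) xⁱ ∂₊`, for which the `(−j)`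
equation is automatic and the `(−−)` equation is the Jacobi equation `c″ = −λᵢ² c`, solved by
`cos(λᵢ t)` and `−λᵢ sin(λᵢ t)`. `K₍ᵢⱼ₎` is an infinitesimal rotation in the `(xⁱ, xʲ)`-plane,
which preserves `g₋₋ = −∑ λₖ² (xᵏ)²` exactly when `λᵢ² = λⱼ²`.
-/

theorem hasDerivAt_sin_const_mul (a t : ℝ) :
    HasDerivAt (fun t => Real.sin (a * t)) (a * Real.cos (a * t)) t := by
  simpa [mul_comm] using ((hasDerivAt_id t).const_mul a).sin

theorem hasDerivAt_cos_const_mul (a t : ℝ) :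
    HasDerivAt (fun t => Real.cos (a * t)) (-(a * Real.sin (a * t))) t := by
  simpa [mul_comm] using ((hasDerivAt_id t).const_mul a).cos

section

variable {n : ℕ}

section PartialDerivatives

variable (μ : CWIdx n) (x : CWPt n)

theorem pd_eq_of_hasFDerivAt {f : CWPt n → ℝ} {f' : CWPt n →L[ℝ] ℝ} (h : HasFDerivAt f f' x) :
    pd μ f x = f' (Pi.single μ 1) := by
  rw [pd, h.fderiv]

@[simp]
theorem pd_const (c : ℝ) : pd μ (fun _ => c) x = 0 := by
  simp [pd]

theorem pd_coord (ν : CWIdx n) : pd μ (fun y => y ν) x = (Pi.single μ 1 : CWPt n) ν :=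
  pd_eq_of_hasFDerivAt μ x (hasFDerivAt_apply (𝕜 := ℝ) ν x)

theorem pd_comp_coord {f : ℝ → ℝ} {f' : ℝ} {ν : CWIdx n} (hf : HasDerivAt f f' (x ν)) :
    pd μ (fun y => f (y ν)) x = f' * (Pi.single μ 1 : CWPt n) ν := by
  have h : HasFDerivAt (fun y : CWPt n => f (y ν)) (f' • ContinuousLinearMap.proj ν) x :=
    hf.comp_hasFDerivAt x (hasFDerivAt_apply (𝕜 := ℝ) ν x)
  simp [pd_eq_of_hasFDerivAt μ x h]

theorem pd_mul {f g : CWPt n → ℝ} (hf : DifferentiableAt ℝ f x) (hg : DifferentiableAt ℝ g x) :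
    pd μ (fun y => f y * g y) x = pd μ f x * g x + f x * pd μ g x := by
  rw [pd_eq_of_hasFDerivAt μ x (hf.hasFDerivAt.fun_mul hg.hasFDerivAt), pd, pd]
  simp only [_root_.add_apply, _root_.smul_apply, smul_eq_mul]
  ring

theorem pd_neg (f : CWPt n → ℝ) : pd μ (fun y => -f y) x = -pd μ f x := by
  simp [pd]

theorem sum_mul_pd (f : CWPt n → ℝ) (v : CWPt n) :
    ∑ κ, v κ * pd κ f x = fderiv ℝ f x v := by
  conv_rhs => rw [pi_eq_sum_univ' v]
  simp [pd, smul_eq_mul]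

end PartialDerivatives

section Metric

variable (B : Matrix (Fin n) (Fin n) ℝ) (x : CWPt n)

@[simp] theorem gB_plus_plus : gB B x (.inl 0) (.inl 0) = 0 := rfl
@[simp] theorem gB_plus_minus : gB B x (.inl 0) (.inl 1) = 1 := rfl
@[simp] theorem gB_minus_plus : gB B x (.inl 1) (.inl 0) = 1 := rfl
@[simp] theorem gB_inl_inr (a : Fin 2) (j : Fin n) : gB B x (.inl a) (.inr j) = 0 := rfl
@[simp] theorem gB_inr_inl (i : Fin n) (b : Fin 2) : gB B x (.inr i) (.inl b) = 0 := rfl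
@[simp] theorem gB_inr_inr (i j : Fin n) : gB B x (.inr i) (.inr j) = if i = j then 1 else 0 := rfl

theorem gB_diagonal_minus_minus (d : Fin n → ℝ) :
    gB (diagonal d) x (.inl 1) (.inl 1) = -∑ i, d i * x (.inr i) ^ 2 := by
  simp [gB, diagonal_apply, ite_mul, sq, mul_assoc]

theorem fderiv_gB_diagonal_minus_minus (d : Fin n → ℝ) (v : CWPt n) :
    fderiv ℝ (fun y => gB (diagonal d) y (.inl 1) (.inl 1)) x v =
      -(2 * ∑ i, d i * x (.inr i) * v (.inr i)) := by
  have h := (HasFDerivAt.fun_sum (u := Finset.univ) fun i _ =>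
    ((hasFDerivAt_apply (𝕜 := ℝ) (Sum.inr i : CWIdx n) x).pow 2).const_mul (d i)).fun_neg
  simp only [gB_diagonal_minus_minus, h.fderiv]
  simp only [Nat.add_one_sub_one, pow_one, nsmul_eq_mul, Nat.cast_ofNat, _root_.neg_apply,
    _root_.sum_apply, _root_.smul_apply, ContinuousLinearMap.proj_apply, smul_eq_mul,
    Finset.mul_sum, neg_inj]
  exact Finset.sum_congr rfl fun i _ => by ring

end Metric

theorem isKilling_of_components {B : Matrix (Fin n) (Fin n) ℝ} {X : CWPt n → CWPt n}
    (h_plus : ∀ x κ, pd (.inl 0) (fun y => X y κ) x = 0)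
    (h_minus : ∀ x μ, pd μ (fun y => X y (.inl 1)) x = 0)
    (h_minus_minus : ∀ x, fderiv ℝ (fun y => gB B y (.inl 1) (.inl 1)) x (X x) +
      2 * pd (.inl 1) (fun y => X y (.inl 0)) x = 0)
    (h_minus_inr : ∀ x j, pd (.inl 1) (fun y => X y (.inr j)) x +
      pd (.inr j) (fun y => X y (.inl 0)) x = 0)
    (h_inr_inr : ∀ x i j, pd (.inr i) (fun y => X y (.inr j)) x +
      pd (.inr j) (fun y => X y (.inr i)) x = 0) :
    IsKilling B X := by
  intro x μ ν
  rw [sum_mul_pd]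
  rcases μ with a | i <;> rcases ν with b | j
  all_goals try fin_cases a
  all_goals try fin_cases b
  all_goals simp only [Fin.zero_eta, Fin.mk_one, Fin.isValue, gB_plus_plus, gB_plus_minus,
    gB_minus_plus, gB_inl_inr, gB_inr_inl, gB_inr_inr, fderiv_fun_const, Pi.zero_apply,
    _root_.zero_apply, Fintype.sum_sum_type, Fin.sum_univ_two, h_plus, h_minus, zero_mul, mul_zero,
    mul_one, add_zero, zero_add, mul_ite, Finset.sum_const_zero, Finset.sum_ite_eq,
    Finset.sum_ite_eq', Finset.mem_univ, ↓reduceIte]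
  · linarith [h_minus_minus x]
  · exact h_minus_inr x j
  · linarith [h_minus_inr x i]
  · exact h_inr_inr x i j

section JacobiField

variable (i : Fin n) (c c' : ℝ → ℝ)

-- `c'` stands for the derivative of `c`.
noncomputable def jacobiField : CWPt n → CWPt n := fun x =>
  Pi.single (.inr i) (c (x (.inl 1))) - Pi.single (.inl 0) (c' (x (.inl 1)) * x (.inr i))

variable {c c'} (x : CWPt n) (μ : CWIdx n)

theorem pd_jacobiField_plus {c'' : ℝ → ℝ} (hc' : ∀ t, HasDerivAt c' (c'' t) t) :
    pd μ (fun y => jacobiField i c c' y (.inl 0)) x =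
      -(c'' (x (.inl 1)) * (Pi.single μ 1 : CWPt n) (.inl 1) * x (.inr i) +
        c' (x (.inl 1)) * (Pi.single μ 1 : CWPt n) (.inr i)) := by
  have hc'x : DifferentiableAt ℝ (fun y : CWPt n => c' (y (.inl 1))) x :=
    (hc' _).differentiableAt.comp x (differentiableAt_apply _ x)
  simp only [jacobiField, Pi.sub_apply, Pi.single_eq_same]
  simp [pd_neg, pd_mul μ x hc'x (differentiableAt_apply _ x), pd_comp_coord μ x (hc' _), pd_coord]

theorem pd_jacobiField_minus : pd μ (fun y => jacobiField i c c' y (.inl 1)) x = 0 := by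
  simp [jacobiField]

theorem pd_jacobiField_inr (hc : ∀ t, HasDerivAt c (c' t) t) (k : Fin n) :
    pd μ (fun y => jacobiField i c c' y (.inr k)) x =
      if k = i then c' (x (.inl 1)) * (Pi.single μ 1 : CWPt n) (.inl 1) else 0 := by
  by_cases hk : k = i
  · subst hk
    simp [jacobiField, pd_comp_coord μ x (hc _)]
  · simp [jacobiField, hk]

theorem isKilling_jacobiField (d : Fin n → ℝ) (hc : ∀ t, HasDerivAt c (c' t) t)
    (hc' : ∀ t, HasDerivAt c' (-(d i * c t)) t) :
    IsKilling (diagonal d) (jacobiField i c c') := by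
  apply isKilling_of_components
  · intro x κ
    rcases κ with a | k
    · fin_cases a
      · simp [pd_jacobiField_plus i x _ hc']
      · exact pd_jacobiField_minus i x _
    · simp [pd_jacobiField_inr i x _ hc]
  · exact pd_jacobiField_minus i
  · intro x
    rw [fderiv_gB_diagonal_minus_minus, pd_jacobiField_plus i x _ hc']
    simp only [jacobiField, Pi.sub_apply, Pi.single_apply, Sum.inr.injEq, reduceCtorEq,
      ↓reduceIte, sub_zero, mul_ite, mul_zero, Finset.sum_ite_eq', Finset.mem_univ, mul_one, neg_mul,
      add_zero, neg_neg]
    ring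
  · intro x j
    simp [pd_jacobiField_plus i x _ hc', pd_jacobiField_inr i x _ hc, Pi.single_apply, eq_comm]
  · intro x j k
    simp [pd_jacobiField_inr i x _ hc]

end JacobiField

theorem isKilling_const (d : Fin n → ℝ) (v : CWPt n) (hv : ∀ i, v (.inr i) = 0) :
    IsKilling (diagonal d) (fun _ => v) := by
  apply isKilling_of_components <;> simp [fderiv_gB_diagonal_minus_minus, hv]

theorem pd_Kij (i j : Fin n) (x : CWPt n) (μ κ : CWIdx n) :
    pd μ (fun y => Kij i j y κ) x = Kij i j (Pi.single μ 1) κ := by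
  rcases κ with a | k
  · simp [Kij]
  by_cases hi : k = i <;> by_cases hj : k = j
  · subst hi hj
    simp [Kij]
  · subst hi
    simp [Kij, hj, pd_coord]
  · subst hj
    simp [Kij, hi, pd_neg, pd_coord]
  · simp [Kij, hi, hj]

theorem isKilling_Kij (d : Fin n → ℝ) {i j : Fin n} (h : d i = d j) :
    IsKilling (diagonal d) (Kij i j) := by
  apply isKilling_of_components <;> simp only [pd_Kij, fderiv_gB_diagonal_minus_minus]
  · simp [Kij]
  · simp [Kij]
  · intro x
    simp only [Kij, Pi.sub_apply, Pi.single_apply, Sum.inr.injEq, reduceCtorEq, ↓reduceIte,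
      mul_sub, mul_ite, mul_zero, Finset.sum_sub_distrib, Finset.sum_ite_eq', Finset.mem_univ, h,
      sub_self, add_zero]
    ring
  · simp [Kij]
  · intro x a b
    simp only [Kij, Pi.sub_apply, Pi.single_apply, Sum.inr.injEq]
    grind

theorem Ki_eq_jacobiField (lam : Fin n → ℝ) (i : Fin n) :
    Ki lam i = jacobiField i (fun t => Real.cos (lam i * t))
      (fun t => -(lam i * Real.sin (lam i * t))) := by
  funext x
  simp only [Ki, jacobiField, sub_eq_add_neg, ← Pi.single_neg, neg_mul, neg_neg]

theorem Kistar_eq_jacobiField (lam : Fin n → ℝ) (i : Fin n) :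
    Kistar lam i = jacobiField i (fun t => -(lam i * Real.sin (lam i * t)))
      (fun t => -(lam i ^ 2 * Real.cos (lam i * t))) := by
  funext x
  simp only [Kistar, jacobiField, sub_eq_add_neg, ← Pi.single_neg, neg_mul, neg_neg]

end

/-- For `B = diag(λ₁², …, λₙ²)` the vector fields `K₊`, `K₋`, `K_{(i)}`, `K_{(i*)}`, and
(for `i ≠ j` with `λ_i² = λ_j²`) `K_{(ij)}` are Killing for `g_B`. -/
theorem killing_fields {n : ℕ} (lam : Fin n → ℝ) :
    IsKilling (Matrix.diagonal fun i => lam i ^ 2) (Kplus (n := n)) ∧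
    IsKilling (Matrix.diagonal fun i => lam i ^ 2) (Kminus (n := n)) ∧
    (∀ i : Fin n, IsKilling (Matrix.diagonal fun i => lam i ^ 2) (Ki lam i)) ∧
    (∀ i : Fin n, IsKilling (Matrix.diagonal fun i => lam i ^ 2) (Kistar lam i)) ∧
    (∀ i j : Fin n, i ≠ j → lam i ^ 2 = lam j ^ 2 →
      IsKilling (Matrix.diagonal fun i => lam i ^ 2) (Kij i j)) := by
  refine ⟨isKilling_const _ _ (by simp), isKilling_const _ _ (by simp), fun i => ?_, fun i => ?_,
    fun i j _ h => isKilling_Kij _ h⟩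
  · rw [Ki_eq_jacobiField]
    exact isKilling_jacobiField i _ (hasDerivAt_cos_const_mul _) fun t =>
      ((hasDerivAt_sin_const_mul (lam i) t).const_mul (lam i)).fun_neg.congr_deriv (by ring)
  · rw [Kistar_eq_jacobiField]
    exact isKilling_jacobiField i _
      (fun t => ((hasDerivAt_sin_const_mul (lam i) t).const_mul (lam i)).fun_neg.congr_deriv (by ring))
      (fun t => ((hasDerivAt_cos_const_mul (lam i) t).const_mul (lam i ^ 2)).fun_neg.congr_deriv
        (by ring))
end

section
/- Fix c, d, ε ∈ Cl(V) and define the linear map ρ : 𝔤 → M₂(Cl(V)) by ρ(v*) = (1/√2)[[0, Bv],[0, 0]], ρ(e₊) = 0, ρ(e₋) = [[c, √2 ε],[0, d]], and ρ(w) = −(1/√2)[[0, c w − w d],[0, 0]] for w ∈ V. Then ρ is a Lie algebra homomorphism from 𝔤 to M₂(Cl(V)) with the commutator bracket (equivalently, the associated spinor connection is flat) if and only if q_{c,d}(v) := c²v + v d² − 2 c v d = −Bv in Cl(V) for all v ∈ V. -/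
open Matrix

/-- The negative definite quadratic form on `V = ℝⁿ`, so that in the Clifford algebra
`Cl(V)` one has `vw + wv = −2⟨v,w⟩`. -/
noncomputable def Qneg (n : ℕ) : QuadraticForm ℝ (Fin n → ℝ) :=
  QuadraticMap.weightedSumSquares ℝ (fun _ : Fin n => (-1 : ℝ))

/-- The Clifford algebra `Cl(V)`. -/
abbrev Cl (n : ℕ) : Type := CliffordAlgebra (Qneg n)

/-- The canonical embedding `V → Cl(V)`. -/
noncomputable def ι {n : ℕ} (v : Fin n → ℝ) : Cl n := CliffordAlgebra.ι (Qneg n) v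

/-- The linear map `ρ : 𝔤 → M₂(Cl(V))` with `ρ(e₊) = 0`:
`ρ(v*) = (1/√2)[[0, Bv],[0, 0]]`, `ρ(e₋) = [[c, √2 ε],[0, d]]`,
`ρ(w) = −(1/√2)[[0, cw − wd],[0, 0]]`. -/
noncomputable def rhoFlat {n : ℕ} (B : Matrix (Fin n) (Fin n) ℝ) (c d ε : Cl n)
    (x : CWAlg n) : Matrix (Fin 2) (Fin 2) (Cl n) :=
  !![x.2.2.1 • c,
     (Real.sqrt 2)⁻¹ • ι (B.mulVec x.1) + (Real.sqrt 2 * x.2.2.1) • ε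
       - (Real.sqrt 2)⁻¹ • (c * ι x.2.2.2 - ι x.2.2.2 * d);
     0,
     x.2.2.1 • d]


lemma iota_sub' {n : ℕ} (v w : Fin n → ℝ) : ι (v - w) = ι v - ι w := by simp [ι]

lemma iota_smul' {n : ℕ} (a : ℝ) (v : Fin n → ℝ) : ι (a • v) = a • ι v := by simp [ι]

lemma iota_zero' {n : ℕ} : ι (0 : Fin n → ℝ) = 0 := by simp [ι]

/-- The map `ρ` (with `ρ(e₊) = 0`) is a Lie algebra homomorphism into `M₂(Cl(V))` with
the commutator bracket — equivalently, the associated spinor connection is flat — if and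
only if `q_{c,d}(v) = c²v + vd² − 2cvd = −Bv` for all `v ∈ V`. -/
theorem rhoFlat_hom_iff {n : ℕ} (B : Matrix (Fin n) (Fin n) ℝ) (hB : B.IsSymm)
    (c d ε : Cl n) :
    (∀ x y : CWAlg n,
        rhoFlat B c d ε (cwBracket B x y)
          = rhoFlat B c d ε x * rhoFlat B c d ε y
            - rhoFlat B c d ε y * rhoFlat B c d ε x)
      ↔ (∀ v : Fin n → ℝ,
          c * c * ι v + ι v * (d * d) - 2 • (c * ι v * d) = -ι (B.mulVec v)) := by
  constructor
  · intro h v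
    have h1 := congrFun (congrFun (h (0, 0, 1, 0) (0, 0, 0, v)) 0) 1
    simp [rhoFlat, cwBracket, Matrix.mul_apply, Fin.sum_univ_two, iota_zero',
      Matrix.mulVec_zero, iota_smul'] at h1
    rw [← smul_neg, ← smul_add] at h1
    have hs : ((Real.sqrt 2)⁻¹ : ℝ) ≠ 0 := by positivity
    have h2 := smul_right_injective (Cl n) hs h1
    rw [h2]
    noncomm_ring
  · intro h x y
    obtain ⟨p, a, b, u⟩ := x
    obtain ⟨p', a', b', u'⟩ := y
    ext i j
    have h' : ∀ v : Fin n → ℝ, ι (B.mulVec v)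
        = -(c * c * ι v + ι v * (d * d) - 2 • (c * ι v * d)) := fun v =>
      neg_eq_iff_eq_neg.mp (h v).symm
    fin_cases i <;> fin_cases j <;>
      simp [rhoFlat, cwBracket, Matrix.mul_apply, Fin.sum_univ_two, iota_sub', iota_smul',
        Matrix.mulVec_smul, Matrix.mulVec_sub] <;>
      simp only [h', mul_sub, sub_mul, mul_add, add_mul, mul_neg, neg_mul, mul_smul_comm,
        smul_mul_assoc, smul_sub, smul_add, smul_neg, smul_smul, mul_assoc] <;>
      match_scalars <;> ring
end

section
/- Assume at least one of the four numbers (α₊−α₋′)² − (α₋−α₊′)², (α₊+α₋′)² − (α₋+α₊′)², (α₋−α₋′)² − (α₊−α₊′)², (α₋+α₋′)² − (α₊+α₊′)² is nonzero. Then the solution space { ξ ∈ ℂ¹⁶ : q(γ_i) ξ = μ_i² γ_i ξ for all i = 1,…,9 } equals the image of X⁺, i.e. equals { ξ ∈ ℂ¹⁶ : X⁻ξ = 0 }, which is the kernel of the curvature condition singling out the parallel spinors; here q(x) := c²x + x d² − 2 c x d. -/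
open Matrix

/-- The eigenvalue parameters `μ₁ = μ₂ = α₋ − α₊′`, `μ₃ = μ₄ = α₋ + α₊′`,
`μ₅ = α₊ − α₊′`, `μ₆ = ⋯ = μ₉ = α₊ + α₊′` (0-indexed). -/
noncomputable def muOf (ap am ap' : ℝ) (i : Fin 9) : ℝ :=
  if (i : ℕ) < 2 then am - ap'
  else if (i : ℕ) < 4 then am + ap'
  else if (i : ℕ) = 4 then ap - ap'
  else ap + ap'

set_option linter.unusedSectionVars false
set_option maxHeartbeats 2000000
set_option linter.unusedTactic false

noncomputable def kOf (ap am ap' am' : ℝ) (i : Fin 9) : ℝ :=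
  if (i : ℕ) < 2 then (ap - am')^2 - (am - ap')^2
  else if (i : ℕ) < 4 then (ap + am')^2 - (am + ap')^2
  else if (i : ℕ) = 4 then (am - am')^2 - (ap - ap')^2
  else (am + am')^2 - (ap + ap')^2

section helpers
variable {R : Type*} [Ring R] [Algebra ℂ R]

lemma comm_of_aa {a b v : R} (ha : a*v = -(v*a)) (hb : b*v = -(v*b)) :
    (a*b)*v = v*(a*b) := by
  rw [mul_assoc, hb, mul_neg, ← mul_assoc, ha]; noncomm_ring

lemma anti_of_ca {a b v : R} (ha : a*v = v*a) (hb : b*v = -(v*b)) :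
    (a*b)*v = -(v*(a*b)) := by
  rw [mul_assoc, hb, mul_neg, ← mul_assoc, ha]; noncomm_ring

lemma anti_of_ac {a b v : R} (ha : a*v = -(v*a)) (hb : b*v = v*b) :
    (a*b)*v = -(v*(a*b)) := by
  rw [mul_assoc, hb, ← mul_assoc, ha]; noncomm_ring

lemma comm_of_cc {a b v : R} (ha : a*v = v*a) (hb : b*v = v*b) :
    (a*b)*v = v*(a*b) := by
  rw [mul_assoc, hb, ← mul_assoc, ha]; noncomm_ring

lemma sq2 {x y : R} (hyx : y*x = -(x*y)) (hx : x*x = -1) (hy : y*y = -1) :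
    (x*y)*(x*y) = -1 := by
  have h1 : (x*y)*(x*y) = x*(y*x)*y := by noncomm_ring
  rw [h1, hyx]
  have h2 : x*(-(x*y))*y = -((x*x)*(y*y)) := by noncomm_ring
  rw [h2, hx, hy]; noncomm_ring

lemma sqprod {A B : R} (hAB : B*A = A*B) (hA : A*A = -1) (hB : B*B = -1) :
    (A*B)*(A*B) = 1 := by
  have h1 : (A*B)*(A*B) = A*(B*A)*B := by noncomm_ring
  rw [h1, hAB]
  have h2 : A*(A*B)*B = (A*A)*(B*B) := by noncomm_ring
  rw [h2, hA, hB]; noncomm_ring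

lemma qid (P g gi : R) (hP : P*P = 1) (hgg : g*g = 1) (hPg : P*g = g*P)
    (ε δ : ℂ) (hε : P*gi = ε•(gi*P)) (hδ : g*gi = δ•(gi*g))
    (a b a' b' μ k : ℂ)
    (hu : a^2+b^2+a'^2+b'^2 - 2*δ*(a*a'+ε*b*b') = μ^2 + k/2)
    (hv : 2*a*b*ε + 2*a'*b' - 2*δ*(a*b'+ε*a'*b) = -(k/2)) :
    ((a•1+b•P)*g)*((a•1+b•P)*g)*gi + gi*(((a'•1+b'•P)*g)*((a'•1+b'•P)*g))
      - (2:ℂ)•(((a•1+b•P)*g)*gi*((a'•1+b'•P)*g))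
    = μ^2•gi + k•(gi*((2:ℂ)⁻¹•(1-P))) := by
  have hswap : ∀ x y : ℂ, g*(x•1+y•P) = (x•1+y•P)*g := by
    intro x y
    simp [mul_add, add_mul, mul_smul_comm, smul_mul_assoc, hPg]
  have hPgiP : P*(gi*P) = ε•gi := by
    rw [← mul_assoc, hε, smul_mul_assoc, mul_assoc, hP, mul_one]
  have hsq : ∀ x y : ℂ, ((x•1+y•P)*g)*((x•1+y•P)*g) = (x^2+y^2)•1 + (2*x*y)•P := by
    intro x y
    have h1 : ((x•1+y•P)*g)*((x•1+y•P)*g) = (x•1+y•P)*(x•1+y•P) := by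
      calc ((x•1+y•P)*g)*((x•1+y•P)*g) = (x•1+y•P)*((g*(x•1+y•P))*g) := by
            noncomm_ring
        _ = (x•1+y•P)*((x•1+y•P)*(g*g)) := by rw [hswap, mul_assoc]
        _ = _ := by rw [hgg, mul_one]
    rw [h1]
    simp only [mul_add, add_mul, smul_mul_assoc, mul_smul_comm, one_mul, mul_one,
      smul_smul, hP]
    module
  have h0 : g*((a'•1+b'•P)*g) = a'•1+b'•P := by
    rw [← mul_assoc, hswap, mul_assoc, hgg, mul_one]
  have hcd : ((a•1+b•P)*g)*gi*((a'•1+b'•P)*g)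
      = (δ*(a*a'+ε*b*b'))•gi + (δ*(a*b'+ε*a'*b))•(gi*P) := by
    have h1 : ((a•1+b•P)*g)*gi*((a'•1+b'•P)*g)
        = δ•((a•1+b•P)*(gi*(a'•1+b'•P))) := by
      calc ((a•1+b•P)*g)*gi*((a'•1+b'•P)*g)
          = (a•1+b•P)*((g*gi)*((a'•1+b'•P)*g)) := by noncomm_ring
        _ = _ := by rw [hδ, smul_mul_assoc, mul_assoc gi, h0, mul_smul_comm]
    rw [h1]
    simp only [mul_add, add_mul, smul_mul_assoc, mul_smul_comm, one_mul, mul_one,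
      smul_add, smul_smul, hε, hPgiP]
    module
  rw [hsq, hsq, hcd]
  rw [add_mul, mul_add, smul_mul_assoc, one_mul, smul_mul_assoc, hε, smul_smul,
    mul_smul_comm, mul_one, mul_smul_comm]
  rw [mul_smul_comm, mul_sub, mul_one]
  match_scalars
  · linear_combination hu
  · linear_combination hv

end helpers

/-- Under the genericity assumption that at least one of the four numbers
`(α₊−α₋′)² − (α₋−α₊′)²`, `(α₊+α₋′)² − (α₋+α₊′)²`, `(α₋−α₋′)² − (α₊−α₊′)²`,
`(α₋+α₋′)² − (α₊+α₊′)²` is nonzero, the solution space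
`{ξ : q(γ_i)ξ = μ_i²γ_iξ for all i}` equals `{ξ : X⁻ξ = 0}`, the image of `X⁺`,
where `q(x) = c²x + xd² − 2cxd`. -/
theorem parallel_spinor_space (γ : Fin 9 → Matrix (Fin 16) (Fin 16) ℂ)
    (hγ : ∀ i j : Fin 9,
      γ i * γ j + γ j * γ i
        = if i = j then (-2 : ℂ) • (1 : Matrix (Fin 16) (Fin 16) ℂ) else 0)
    (ap am ap' am' : ℝ)
    (hgen : (ap - am') ^ 2 - (am - ap') ^ 2 ≠ 0 ∨
            (ap + am') ^ 2 - (am + ap') ^ 2 ≠ 0 ∨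
            (am - am') ^ 2 - (ap - ap') ^ 2 ≠ 0 ∨
            (am + am') ^ 2 - (ap + ap') ^ 2 ≠ 0) :
    -- abbreviations
    letI Xp : Matrix (Fin 16) (Fin 16) ℂ := (2 : ℂ)⁻¹ • (1 + γ 0 * γ 1 * γ 2 * γ 3)
    letI Xm : Matrix (Fin 16) (Fin 16) ℂ := (2 : ℂ)⁻¹ • (1 - γ 0 * γ 1 * γ 2 * γ 3)
    letI c : Matrix (Fin 16) (Fin 16) ℂ :=
      ((ap : ℂ) • Xp + (am : ℂ) • Xm) * (γ 0 * γ 1 * γ 4)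
    letI d : Matrix (Fin 16) (Fin 16) ℂ :=
      ((ap' : ℂ) • Xp + (am' : ℂ) • Xm) * (γ 0 * γ 1 * γ 4)
    {ξ : Fin 16 → ℂ | ∀ i : Fin 9,
        (c * c * γ i + γ i * (d * d) - 2 • (c * γ i * d)) *ᵥ ξ
          = ((muOf ap am ap' i : ℂ) ^ 2) • (γ i *ᵥ ξ)}
      = {ξ : Fin 16 → ℂ | Xm *ᵥ ξ = 0} := by

  set Xp : Matrix (Fin 16) (Fin 16) ℂ := (2 : ℂ)⁻¹ • (1 + γ 0 * γ 1 * γ 2 * γ 3) with hXpdef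
  set Xm : Matrix (Fin 16) (Fin 16) ℂ := (2 : ℂ)⁻¹ • (1 - γ 0 * γ 1 * γ 2 * γ 3) with hXm2
  set c : Matrix (Fin 16) (Fin 16) ℂ := ((ap : ℂ) • Xp + (am : ℂ) • Xm) * (γ 0 * γ 1 * γ 4) with hcdef
  set d : Matrix (Fin 16) (Fin 16) ℂ := ((ap' : ℂ) • Xp + (am' : ℂ) • Xm) * (γ 0 * γ 1 * γ 4) with hddef
  -- basic Clifford facts
  have sq : ∀ i : Fin 9, γ i * γ i = -1 := by
    intro i
    have h := hγ i i
    rw [if_pos rfl] at h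
    have h2 : (2:ℂ) • (γ i * γ i) = (-2:ℂ) • (1 : Matrix (Fin 16) (Fin 16) ℂ) := by
      rw [two_smul]; exact h
    calc γ i * γ i = (2:ℂ)⁻¹ • ((2:ℂ) • (γ i * γ i)) := by
          rw [smul_smul]; norm_num
      _ = (2:ℂ)⁻¹ • ((-2:ℂ) • (1 : Matrix (Fin 16) (Fin 16) ℂ)) := by rw [h2]
      _ = -1 := by rw [smul_smul]; norm_num
  have anti : ∀ i j : Fin 9, i ≠ j → γ i * γ j = -(γ j * γ i) := by
    intro i j hij
    have h := hγ i j
    rw [if_neg hij] at h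
    exact eq_neg_of_add_eq_zero_left h
  -- commutation facts for P = γ0γ1γ2γ3 and g = γ0γ1γ4
  have P0 : (γ 0*γ 1*γ 2*γ 3)*γ 0 = -(γ 0*(γ 0*γ 1*γ 2*γ 3)) :=
    anti_of_ca (comm_of_aa (anti_of_ca rfl (anti 1 0 (by decide)))
      (anti 2 0 (by decide))) (anti 3 0 (by decide))
  have P1 : (γ 0*γ 1*γ 2*γ 3)*γ 1 = -(γ 1*(γ 0*γ 1*γ 2*γ 3)) :=
    anti_of_ca (comm_of_aa (anti_of_ac (anti 0 1 (by decide)) rfl)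
      (anti 2 1 (by decide))) (anti 3 1 (by decide))
  have P2 : (γ 0*γ 1*γ 2*γ 3)*γ 2 = -(γ 2*(γ 0*γ 1*γ 2*γ 3)) :=
    anti_of_ca (comm_of_cc (comm_of_aa (anti 0 2 (by decide)) (anti 1 2 (by decide)))
      rfl) (anti 3 2 (by decide))
  have P3 : (γ 0*γ 1*γ 2*γ 3)*γ 3 = -(γ 3*(γ 0*γ 1*γ 2*γ 3)) :=
    anti_of_ac (anti_of_ca (comm_of_aa (anti 0 3 (by decide)) (anti 1 3 (by decide)))
      (anti 2 3 (by decide))) rfl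
  have Pc : ∀ i : Fin 9, γ 0 ≠ γ 0 ∨ True → True := fun _ _ => trivial
  have Phi : ∀ i : Fin 9, i ≠ 0 → i ≠ 1 → i ≠ 2 → i ≠ 3 →
      (γ 0*γ 1*γ 2*γ 3)*γ i = γ i*(γ 0*γ 1*γ 2*γ 3) := by
    intro i h0 h1 h2 h3
    exact comm_of_aa (anti_of_ca (comm_of_aa (anti 0 i (Ne.symm h0))
      (anti 1 i (Ne.symm h1))) (anti 2 i (Ne.symm h2))) (anti 3 i (Ne.symm h3))
  have g0 : (γ 0*γ 1*γ 4)*γ 0 = γ 0*(γ 0*γ 1*γ 4) :=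
    comm_of_aa (anti_of_ca rfl (anti 1 0 (by decide))) (anti 4 0 (by decide))
  have g1 : (γ 0*γ 1*γ 4)*γ 1 = γ 1*(γ 0*γ 1*γ 4) :=
    comm_of_aa (anti_of_ac (anti 0 1 (by decide)) rfl) (anti 4 1 (by decide))
  have g4 : (γ 0*γ 1*γ 4)*γ 4 = γ 4*(γ 0*γ 1*γ 4) :=
    comm_of_cc (comm_of_aa (anti 0 4 (by decide)) (anti 1 4 (by decide))) rfl
  have ghi : ∀ i : Fin 9, i ≠ 0 → i ≠ 1 → i ≠ 4 →
      (γ 0*γ 1*γ 4)*γ i = -(γ i*(γ 0*γ 1*γ 4)) := by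
    intro i h0 h1 h4
    exact anti_of_ca (comm_of_aa (anti 0 i (Ne.symm h0)) (anti 1 i (Ne.symm h1)))
      (anti 4 i (Ne.symm h4))
  have hA : (γ 0*γ 1)*(γ 0*γ 1) = -1 := sq2 (anti 1 0 (by decide)) (sq 0) (sq 1)
  have hB : (γ 2*γ 3)*(γ 2*γ 3) = -1 := sq2 (anti 3 2 (by decide)) (sq 2) (sq 3)
  have h02 : (γ 0*γ 1)*γ 2 = γ 2*(γ 0*γ 1) :=
    comm_of_aa (anti 0 2 (by decide)) (anti 1 2 (by decide))
  have h03 : (γ 0*γ 1)*γ 3 = γ 3*(γ 0*γ 1) :=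
    comm_of_aa (anti 0 3 (by decide)) (anti 1 3 (by decide))
  have hAB : (γ 2*γ 3)*(γ 0*γ 1) = (γ 0*γ 1)*(γ 2*γ 3) :=
    comm_of_cc h02.symm h03.symm
  have hPassoc : γ 0*γ 1*γ 2*γ 3 = (γ 0*γ 1)*(γ 2*γ 3) := by noncomm_ring
  have hPP : (γ 0*γ 1*γ 2*γ 3)*(γ 0*γ 1*γ 2*γ 3) = 1 := by
    rw [hPassoc]; exact sqprod hAB hA hB
  have h04 : (γ 0*γ 1)*γ 4 = γ 4*(γ 0*γ 1) :=
    comm_of_aa (anti 0 4 (by decide)) (anti 1 4 (by decide))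
  have hgg : (γ 0*γ 1*γ 4)*(γ 0*γ 1*γ 4) = 1 := sqprod h04.symm hA (sq 4)
  have hPg : (γ 0*γ 1*γ 2*γ 3)*(γ 0*γ 1*γ 4) = (γ 0*γ 1*γ 4)*(γ 0*γ 1*γ 2*γ 3) := by
    refine comm_of_aa ?_ ?_
    · exact anti_of_ca (comm_of_cc g0.symm g1.symm)
        (by rw [ghi 2 (by decide) (by decide) (by decide), neg_neg])
    · rw [ghi 3 (by decide) (by decide) (by decide), neg_neg]
  -- expressing c, d in the 1/P basis
  have hXpm : ∀ x y : ℂ, x•Xp + y•Xm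
      = ((x+y)/2)•(1 : Matrix (Fin 16) (Fin 16) ℂ) + ((x-y)/2)•(γ 0*γ 1*γ 2*γ 3) := by
    intro x y
    rw [hXpdef, hXm2]
    match_scalars <;> ring
  have hc : c = ((((ap:ℂ)+am)/2)•1 + (((ap:ℂ)-am)/2)•(γ 0*γ 1*γ 2*γ 3))*(γ 0*γ 1*γ 4) := by
    rw [hcdef, hXpm]
  have hd : d = ((((ap':ℂ)+am')/2)•1 + (((ap':ℂ)-am')/2)•(γ 0*γ 1*γ 2*γ 3))*(γ 0*γ 1*γ 4) := by
    rw [hddef, hXpm]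
  -- the master identity
  have main : ∀ (i : Fin 9) (ε δ μ k : ℂ),
      (γ 0*γ 1*γ 2*γ 3)*γ i = ε•(γ i*(γ 0*γ 1*γ 2*γ 3)) →
      (γ 0*γ 1*γ 4)*γ i = δ•(γ i*(γ 0*γ 1*γ 4)) →
      ((((ap:ℂ)+am)/2)^2 + (((ap:ℂ)-am)/2)^2 + (((ap':ℂ)+am')/2)^2 + (((ap':ℂ)-am')/2)^2
        - 2*δ*((((ap:ℂ)+am)/2)*((((ap':ℂ)+am')/2)) + ε*(((ap:ℂ)-am)/2)*(((ap':ℂ)-am')/2))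
        = μ^2 + k/2) →
      (2*(((ap:ℂ)+am)/2)*(((ap:ℂ)-am)/2)*ε + 2*(((ap':ℂ)+am')/2)*(((ap':ℂ)-am')/2)
        - 2*δ*((((ap:ℂ)+am)/2)*(((ap':ℂ)-am')/2) + ε*(((ap':ℂ)+am')/2)*(((ap:ℂ)-am)/2))
        = -(k/2)) →
      c*c*γ i + γ i*(d*d) - 2•(c*γ i*d) = μ^2•γ i + k•(γ i*Xm) := by
    intro i ε δ μ k hε hδ hu hv
    have h2 : (2:ℕ)•(c*γ i*d) = (2:ℂ)•(c*γ i*d) := by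
      rw [two_smul, two_smul]
    rw [h2, hc, hd, hXm2]
    exact qid _ _ _ hPP hgg hPg ε δ hε hδ _ _ _ _ μ k hu hv
  -- the nine identities
  have Q : ∀ i : Fin 9, c*c*γ i + γ i*(d*d) - 2•(c*γ i*d)
      = (((muOf ap am ap' i : ℝ) : ℂ))^2•γ i + (((kOf ap am ap' am' i : ℝ) : ℂ))•(γ i*Xm) := by
    intro i
    fin_cases i
    · exact main 0 (-1) 1 _ _ (by rw [neg_one_smul]; exact P0)
        (by rw [one_smul]; exact g0)
        (by norm_num [muOf, kOf]; push_cast; ring)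
        (by norm_num [muOf, kOf]; push_cast; ring)
    · exact main 1 (-1) 1 _ _ (by rw [neg_one_smul]; exact P1)
        (by rw [one_smul]; exact g1)
        (by norm_num [muOf, kOf]; push_cast; ring)
        (by norm_num [muOf, kOf]; push_cast; ring)
    · exact main 2 (-1) (-1) _ _ (by rw [neg_one_smul]; exact P2)
        (by rw [neg_one_smul]; exact ghi 2 (by decide) (by decide) (by decide))
        (by norm_num [muOf, kOf]; push_cast; ring)
        (by norm_num [muOf, kOf]; push_cast; ring)
    · exact main 3 (-1) (-1) _ _ (by rw [neg_one_smul]; exact P3)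
        (by rw [neg_one_smul]; exact ghi 3 (by decide) (by decide) (by decide))
        (by norm_num [muOf, kOf]; push_cast; ring)
        (by norm_num [muOf, kOf]; push_cast; ring)
    · exact main 4 1 1 _ _ (by rw [one_smul]; exact Phi 4 (by decide) (by decide) (by decide) (by decide))
        (by rw [one_smul]; exact g4)
        (by norm_num [muOf, kOf]; push_cast; ring)
        (by norm_num [muOf, kOf]; push_cast; ring)
    · exact main 5 1 (-1) _ _ (by rw [one_smul]; exact Phi 5 (by decide) (by decide) (by decide) (by decide))
        (by rw [neg_one_smul]; exact ghi 5 (by decide) (by decide) (by decide))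
        (by norm_num [muOf, kOf]; push_cast; ring)
        (by norm_num [muOf, kOf]; push_cast; ring)
    · exact main 6 1 (-1) _ _ (by rw [one_smul]; exact Phi 6 (by decide) (by decide) (by decide) (by decide))
        (by rw [neg_one_smul]; exact ghi 6 (by decide) (by decide) (by decide))
        (by norm_num [muOf, kOf]; push_cast; ring)
        (by norm_num [muOf, kOf]; push_cast; ring)
    · exact main 7 1 (-1) _ _ (by rw [one_smul]; exact Phi 7 (by decide) (by decide) (by decide) (by decide))
        (by rw [neg_one_smul]; exact ghi 7 (by decide) (by decide) (by decide))
        (by norm_num [muOf, kOf]; push_cast; ring)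
        (by norm_num [muOf, kOf]; push_cast; ring)
    · exact main 8 1 (-1) _ _ (by rw [one_smul]; exact Phi 8 (by decide) (by decide) (by decide) (by decide))
        (by rw [neg_one_smul]; exact ghi 8 (by decide) (by decide) (by decide))
        (by norm_num [muOf, kOf]; push_cast; ring)
        (by norm_num [muOf, kOf]; push_cast; ring)
  ext ξ
  simp only [Set.mem_setOf_eq]
  constructor
  · intro h
    have step : ∀ i : Fin 9, ((kOf ap am ap' am' i : ℝ) : ℂ) ≠ 0 → Xm *ᵥ ξ = 0 := by
      intro i hk
      have hi := h i
      rw [Q i, add_mulVec, smul_mulVec, smul_mulVec] at hi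
      have hz : ((kOf ap am ap' am' i : ℝ) : ℂ) • ((γ i * Xm) *ᵥ ξ) = 0 :=
        add_eq_left.mp hi
      have h3 : (γ i * Xm) *ᵥ ξ = 0 := by
        rcases smul_eq_zero.mp hz with h'|h'
        · exact absurd h' hk
        · exact h'
      have h5 : (-(γ i)) * (γ i * Xm) = Xm := by
        rw [neg_mul, ← mul_assoc, sq i]; noncomm_ring
      calc Xm *ᵥ ξ = ((-(γ i)) * (γ i * Xm)) *ᵥ ξ := by rw [h5]
        _ = (-(γ i)) *ᵥ ((γ i * Xm) *ᵥ ξ) := by rw [mulVec_mulVec]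
        _ = 0 := by rw [h3, mulVec_zero]
    rcases hgen with h1|h1|h1|h1
    · refine step 0 ?_
      norm_num [kOf]
      exact_mod_cast h1
    · refine step 2 ?_
      norm_num [kOf]
      exact_mod_cast h1
    · refine step 4 ?_
      norm_num [kOf]
      exact_mod_cast h1
    · refine step 5 ?_
      norm_num [kOf]
      exact_mod_cast h1
  · intro h i
    rw [Q i, add_mulVec, smul_mulVec, smul_mulVec]
    have h3 : (γ i * Xm) *ᵥ ξ = 0 := by
      rw [← mulVec_mulVec, h, mulVec_zero]
    rw [h3, smul_zero, add_zero]
end
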